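/- Consider the hybrid closed-loop system ẋ_{cl} = A_{cl} x_{cl} + P_{cl} w, x_{cl}⁺ = E_{cl} x_{cl}, e = C_{cl} x_{cl} + Q_{cl} w, driven by the exosystem ẇ = Sw, w⁺ = Jw, all with period τ_M. Suppose the unforced closed loop (w ≡ 0) is globally exponentially stable (spectrum of E_{cl} e^{A_{cl}τ_M} in the open unit disc) and assume there exists Π satisfying the flow Sylvester equation ΠS = A_{cl}Π + P_{cl}, the jump condition ΠJ = E_{cl}Π, and C_{cl}Π + Q_{cl} = 0. Then e(t,k) → 0 as t + k → ∞ for every initial condition. -/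

import Mathlib

open Matrix NormedSpace

open Filter

/-- Representation of solutions of a linear ODE via the matrix exponential. -/
lemma linear_ode_rep {n : ℕ} (A : Matrix (Fin n) (Fin n) ℝ) (f : ℝ → Fin n → ℝ) (a b : ℝ)
    (hf : ∀ t ∈ Set.Icc a b, HasDerivAt f (A.mulVec (f t)) t) :
    ∀ t ∈ Set.Icc a b, f t = (exp ((t - a) • A)).mulVec (f a) := by
  letI : SeminormedRing (Matrix (Fin n) (Fin n) ℝ) := Matrix.linftyOpSemiNormedRing
  letI : NormedRing (Matrix (Fin n) (Fin n) ℝ) := Matrix.linftyOpNormedRing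
  letI : NormedAlgebra ℝ (Matrix (Fin n) (Fin n) ℝ) := Matrix.linftyOpNormedAlgebra
  set g : ℝ → Fin n → ℝ := fun t => (exp ((t - a) • A)).mulVec (f a) with hg_def
  set Lc : Matrix (Fin n) (Fin n) ℝ →L[ℝ] (Fin n → ℝ) :=
    LinearMap.toContinuousLinearMap
      { toFun := fun B => B.mulVec (f a)
        map_add' := fun B C => Matrix.add_mulVec B C (f a)
        map_smul' := fun c B => Matrix.smul_mulVec c B (f a) } with hLc_def
  have hg : ∀ t : ℝ, HasDerivAt g (A.mulVec (g t)) t := by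
    intro t
    have h1 : HasDerivAt (fun u : ℝ => exp (u • A)) (A * exp ((t - a) • A)) (t - a) :=
      hasDerivAt_exp_smul_const' A (t - a)
    have h2 : HasDerivAt (fun u : ℝ => u - a) 1 t := (hasDerivAt_id t).sub_const a
    have h3 : HasDerivAt (fun u : ℝ => exp ((u - a) • A)) (A * exp ((t - a) • A)) t := by
      have h := h1.scomp t h2
      rw [one_smul] at h
      exact h
    have h4 := Lc.hasFDerivAt.comp_hasDerivAt t h3
    have h5 : Lc (A * exp ((t - a) • A)) = A.mulVec (g t) := by
      show (A * exp ((t - a) • A)).mulVec (f a) = A.mulVec ((exp ((t - a) • A)).mulVec (f a))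
      rw [Matrix.mulVec_mulVec]
    exact h4.congr_deriv h5
  set L : (Fin n → ℝ) →L[ℝ] (Fin n → ℝ) := LinearMap.toContinuousLinearMap A.mulVecLin with hL
  have hlip : ∀ t : ℝ, LipschitzWith ‖L‖₊ (fun y : Fin n → ℝ => A.mulVec y) := fun _ => L.lipschitz
  have key := ODE_solution_unique (v := fun _ y => A.mulVec y) (K := ‖L‖₊) (f := f) (g := g)
    (a := a) (b := b) hlip
    (fun t ht => (hf t ht).continuousAt.continuousWithinAt)
    (fun t ht => (hf t (Set.Ico_subset_Icc_self ht)).hasDerivWithinAt)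
    (fun t _ => (hg t).continuousAt.continuousWithinAt)
    (fun t _ => (hg t).hasDerivWithinAt)
    (by simp [hg_def, exp_zero, Matrix.one_mulVec])
  exact fun t ht => key ht

/-- Powers of a matrix with complex spectrum inside the open unit disc act as contractions
eventually. -/
lemma pow_mulVec_small {n : ℕ} (M : Matrix (Fin n) (Fin n) ℝ)
    (h : ∀ μ ∈ spectrum ℂ (M.map Complex.ofReal), ‖μ‖ < 1) :
    ∀ ε > 0, ∃ K : ℕ, ∀ k ≥ K, ∀ v : Fin n → ℝ, ‖(M ^ k).mulVec v‖ ≤ ε * ‖v‖ := by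
  letI : SeminormedRing (Matrix (Fin n) (Fin n) ℝ) := Matrix.linftyOpSemiNormedRing
  letI : NormedRing (Matrix (Fin n) (Fin n) ℝ) := Matrix.linftyOpNormedRing
  letI : NormedAlgebra ℝ (Matrix (Fin n) (Fin n) ℝ) := Matrix.linftyOpNormedAlgebra
  letI : SeminormedRing (Matrix (Fin n) (Fin n) ℂ) := Matrix.linftyOpSemiNormedRing
  letI : NormedRing (Matrix (Fin n) (Fin n) ℂ) := Matrix.linftyOpNormedRing
  letI : NormedAlgebra ℂ (Matrix (Fin n) (Fin n) ℂ) := Matrix.linftyOpNormedAlgebra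
  set Mc : Matrix (Fin n) (Fin n) ℂ := M.map Complex.ofReal with hMc
  have hmap : ∀ B : Matrix (Fin n) (Fin n) ℝ,
      B.map Complex.ofReal = (algebraMap ℝ ℂ).mapMatrix B := by
    intro B; ext i j; simp [RingHom.mapMatrix_apply]
  have hpow : ∀ k : ℕ, (M ^ k).map Complex.ofReal = Mc ^ k := by
    intro k
    rw [hmap, map_pow, hMc, hmap]
  have hnn : ∀ B : Matrix (Fin n) (Fin n) ℝ, ‖B.map Complex.ofReal‖₊ = ‖B‖₊ := by
    intro B
    rw [Matrix.linfty_opNNNorm_def, Matrix.linfty_opNNNorm_def]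
    congr 1; ext i; congr 1; ext j
    simp [Matrix.map_apply]
  have hnorm : ∀ k : ℕ, ‖M ^ k‖₊ = ‖Mc ^ k‖₊ := by
    intro k; rw [← hpow, hnn]
  -- spectral radius strictly below one
  have hρ : spectralRadius ℂ Mc < 1 := by
    rcases Set.eq_empty_or_nonempty (spectrum ℂ Mc) with hemp | hne
    · rw [spectralRadius, hemp]
      simp
    · obtain ⟨μ0, hμ0, hmax⟩ :=
        (spectrum.isCompact Mc).exists_isMaxOn hne continuous_norm.continuousOn
      calc spectralRadius ℂ Mc ≤ (‖μ0‖₊ : ENNReal) := by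
            apply iSup₂_le
            intro μ hμ
            exact_mod_cast ENNReal.coe_le_coe.mpr (by exact_mod_cast hmax hμ)
        _ < 1 := by
            rw [← ENNReal.coe_one, ENNReal.coe_lt_coe]
            exact_mod_cast h μ0 hμ0
  -- Gelfand's formula: norms of powers tend to zero
  obtain ⟨r, hρr, hr1⟩ := exists_between hρ
  have hev := (spectrum.pow_nnnorm_pow_one_div_tendsto_nhds_spectralRadius Mc).eventually_lt_const hρr
  have hev2 : ∀ᶠ k : ℕ in atTop, (‖Mc ^ k‖₊ : ENNReal) ≤ r ^ k := by
    filter_upwards [hev, Filter.eventually_ge_atTop 1] with k hk hk1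
    have hk0 : (k : ℝ) ≠ 0 := by positivity
    have h1 : ((‖Mc ^ k‖₊ : ENNReal) ^ (1 / (k : ℝ))) ^ (k : ℝ) ≤ r ^ (k : ℝ) :=
      ENNReal.rpow_le_rpow hk.le (by positivity)
    have h2 : ((‖Mc ^ k‖₊ : ENNReal) ^ (1 / (k : ℝ))) ^ (k : ℝ) = (‖Mc ^ k‖₊ : ENNReal) := by
      rw [← ENNReal.rpow_mul, one_div, inv_mul_cancel₀ hk0, ENNReal.rpow_one]
    rw [← ENNReal.rpow_natCast r k, ← h2]
    exact h1
  have htend : Tendsto (fun k : ℕ => (‖Mc ^ k‖₊ : ENNReal)) atTop (nhds 0) := by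
    refine tendsto_of_tendsto_of_tendsto_of_le_of_le' tendsto_const_nhds
      (ENNReal.tendsto_pow_atTop_nhds_zero_of_lt_one hr1) ?_ hev2
    exact Filter.Eventually.of_forall fun _ => zero_le
  intro ε hε
  have hev3 : ∀ᶠ k : ℕ in atTop, (‖Mc ^ k‖₊ : ENNReal) < ENNReal.ofReal ε :=
    htend.eventually_lt_const (by simpa using ENNReal.ofReal_pos.mpr hε)
  obtain ⟨K, hK⟩ := hev3.exists_forall_of_atTop
  refine ⟨K, fun k hk v => ?_⟩
  have h4 : ‖M ^ k‖ ≤ ε := by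
    have h5 := hK k hk
    rw [ENNReal.ofReal] at h5
    rw [ENNReal.coe_lt_coe] at h5
    have h6 : ‖Mc ^ k‖ < (ε.toNNReal : ℝ) := h5
    have h7 : (ε.toNNReal : ℝ) = ε := Real.coe_toNNReal ε hε.le
    have h8 : ‖M ^ k‖ = ‖Mc ^ k‖ := congrArg NNReal.toReal (hnorm k)
    rw [h8, ← h7]
    exact h6.le
  calc ‖(M ^ k).mulVec v‖ ≤ ‖M ^ k‖ * ‖v‖ := Matrix.linfty_opNorm_mulVec _ _
    _ ≤ ε * ‖v‖ := mul_le_mul_of_nonneg_right h4 (norm_nonneg v)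

/-- Uniform bound for the flow maps over a compact time horizon. -/
lemma exp_flow_bound {n : ℕ} (A : Matrix (Fin n) (Fin n) ℝ) (τ : ℝ) :
    ∃ C > 0, ∀ s ∈ Set.Icc (0 : ℝ) τ, ∀ v : Fin n → ℝ,
      ‖(exp (s • A)).mulVec v‖ ≤ C * ‖v‖ := by
  letI : SeminormedRing (Matrix (Fin n) (Fin n) ℝ) := Matrix.linftyOpSemiNormedRing
  letI : NormedRing (Matrix (Fin n) (Fin n) ℝ) := Matrix.linftyOpNormedRing
  letI : NormedAlgebra ℝ (Matrix (Fin n) (Fin n) ℝ) := Matrix.linftyOpNormedAlgebra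
  have hcont : ContinuousOn (fun s : ℝ => exp (s • A)) (Set.Icc 0 τ) := by
    intro s _
    exact (hasDerivAt_exp_smul_const' A s).continuousAt.continuousWithinAt
  obtain ⟨C, hC⟩ := isCompact_Icc.exists_bound_of_continuousOn hcont
  refine ⟨max C 0 + 1, by positivity, fun s hs v => ?_⟩
  calc ‖(exp (s • A)).mulVec v‖ ≤ ‖exp (s • A)‖ * ‖v‖ := Matrix.linfty_opNorm_mulVec _ _
    _ ≤ (max C 0 + 1) * ‖v‖ := by
        apply mul_le_mul_of_nonneg_right _ (norm_nonneg v)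
        have h1 := hC s hs
        have h2 : C ≤ max C 0 := le_max_left _ _
        linarith

/-- hybrid output regulation. If the unforced closed loop is GES
(spectrum of `E_cl exp(τM • A_cl)` in the open unit disc) and `Π` solves the
flow Sylvester equation `Π S = A_cl Π + P_cl`, the jump condition `Π J = E_cl Π`,
and `C_cl Π + Q_cl = 0`, then the regulated error `e(t,k)` of every solution
tends to `0` as `t + k → ∞`. -/
theorem hybrid_output_regulation
    {nc q : ℕ} (Acl Ecl : Matrix (Fin nc) (Fin nc) ℝ)
    (Pcl : Matrix (Fin nc) (Fin q) ℝ)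
    {pe : ℕ} (Ccl : Matrix (Fin pe) (Fin nc) ℝ) (Qcl : Matrix (Fin pe) (Fin q) ℝ)
    (S J : Matrix (Fin q) (Fin q) ℝ) (τM : ℝ) (hτM : 0 < τM)
    (hGES : ∀ μ ∈ spectrum ℂ ((Ecl * exp (τM • Acl)).map (Complex.ofReal)), ‖μ‖ < 1)
    (Pi_ : Matrix (Fin nc) (Fin q) ℝ)
    (hflowSyl : Pi_ * S = Acl * Pi_ + Pcl)
    (hjumpSyl : Pi_ * J = Ecl * Pi_)
    (hreg : Ccl * Pi_ + Qcl = 0)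
    -- a solution of the hybrid closed loop driven by the exosystem,
    -- given per jump index `k` on the flow interval `[k τM, (k+1) τM]`
    (x : ℕ → ℝ → Fin nc → ℝ) (w : ℕ → ℝ → Fin q → ℝ)
    (hflow_w : ∀ k : ℕ, ∀ t ∈ Set.Icc ((k : ℝ) * τM) (((k : ℝ) + 1) * τM),
      HasDerivAt (w k) (S.mulVec (w k t)) t)
    (hflow_x : ∀ k : ℕ, ∀ t ∈ Set.Icc ((k : ℝ) * τM) (((k : ℝ) + 1) * τM),
      HasDerivAt (x k) (Acl.mulVec (x k t) + Pcl.mulVec (w k t)) t)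
    (hjump_w : ∀ k : ℕ, w (k + 1) (((k : ℝ) + 1) * τM) = J.mulVec (w k (((k : ℝ) + 1) * τM)))
    (hjump_x : ∀ k : ℕ, x (k + 1) (((k : ℝ) + 1) * τM) = Ecl.mulVec (x k (((k : ℝ) + 1) * τM))) :
    -- the regulated error tends to zero as t + k → ∞
    ∀ ε > 0, ∃ T : ℝ, ∀ k : ℕ, ∀ t ∈ Set.Icc ((k : ℝ) * τM) (((k : ℝ) + 1) * τM),
      T ≤ t + (k : ℝ) →
      ‖Ccl.mulVec (x k t) + Qcl.mulVec (w k t)‖ < ε := by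
  classical
  set z : ℕ → ℝ → Fin nc → ℝ := fun k t => x k t - Pi_.mulVec (w k t) with hz_def
  set M : Matrix (Fin nc) (Fin nc) ℝ := Ecl * exp (τM • Acl) with hM_def
  set LPi : (Fin q → ℝ) →L[ℝ] (Fin nc → ℝ) :=
    LinearMap.toContinuousLinearMap Pi_.mulVecLin with hLPi
  -- the error coordinate flows according to the unforced dynamics
  have hz' : ∀ k : ℕ, ∀ t ∈ Set.Icc ((k : ℝ) * τM) (((k : ℝ) + 1) * τM),
      HasDerivAt (z k) (Acl.mulVec (z k t)) t := by
    intro k t ht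
    have h1 := hflow_x k t ht
    have h2 := LPi.hasFDerivAt.comp_hasDerivAt t (hflow_w k t ht)
    have h3 := h1.sub h2
    have h4 : Acl.mulVec (z k t)
        = Acl.mulVec (x k t) + Pcl.mulVec (w k t) - Pi_.mulVec (S.mulVec (w k t)) := by
      simp only [hz_def]
      rw [Matrix.mulVec_sub, Matrix.mulVec_mulVec, Matrix.mulVec_mulVec, hflowSyl,
        Matrix.add_mulVec]
      abel
    rw [h4]
    exact h3
  -- exponential representation of the flow
  have hrep : ∀ k : ℕ, ∀ t ∈ Set.Icc ((k : ℝ) * τM) (((k : ℝ) + 1) * τM),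
      z k t = (exp ((t - (k : ℝ) * τM) • Acl)).mulVec (z k ((k : ℝ) * τM)) :=
    fun k => linear_ode_rep Acl (z k) _ _ (hz' k)
  -- discrete recursion for the jump values
  have hζ : ∀ k : ℕ, z k ((k : ℝ) * τM) = (M ^ k).mulVec (z 0 ((0 : ℝ) * τM)) := by
    intro k
    induction k with
    | zero => simp [Matrix.one_mulVec]
    | succ k ih =>
      have hmem : ((k : ℝ) + 1) * τM ∈ Set.Icc ((k : ℝ) * τM) (((k : ℝ) + 1) * τM) := by
        constructor
        · nlinarith [Nat.cast_nonneg (α := ℝ) k]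
        · exact le_rfl
      have hend : z k (((k : ℝ) + 1) * τM)
          = (exp (τM • Acl)).mulVec (z k ((k : ℝ) * τM)) := by
        have h5 := hrep k (((k : ℝ) + 1) * τM) hmem
        have h6 : ((k : ℝ) + 1) * τM - (k : ℝ) * τM = τM := by ring
        rw [h6] at h5
        exact h5
      have hcast : (((k + 1 : ℕ)) : ℝ) = (k : ℝ) + 1 := by push_cast; ring
      have hjump : z (k + 1) (((k : ℝ) + 1) * τM)
          = Ecl.mulVec (z k (((k : ℝ) + 1) * τM)) := by
        simp only [hz_def]
        rw [hjump_x k, hjump_w k, Matrix.mulVec_mulVec, hjumpSyl, Matrix.mulVec_sub,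
          Matrix.mulVec_mulVec]
      rw [hcast, hjump, hend, ih, Matrix.mulVec_mulVec, Matrix.mulVec_mulVec,
        ← hM_def, ← pow_succ']

  -- the regulated error equals the output of the error coordinate
  have herr : ∀ (k : ℕ) (t : ℝ),
      Ccl.mulVec (x k t) + Qcl.mulVec (w k t) = Ccl.mulVec (z k t) := by
    intro k t
    have h0 : (Ccl * Pi_).mulVec (w k t) + Qcl.mulVec (w k t) = 0 := by
      rw [← Matrix.add_mulVec, hreg, Matrix.zero_mulVec]
    have h4 : Qcl.mulVec (w k t) = -((Ccl * Pi_).mulVec (w k t)) :=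
      eq_neg_of_add_eq_zero_left (by rw [add_comm]; exact h0)
    simp only [hz_def]
    rw [Matrix.mulVec_sub, Matrix.mulVec_mulVec, h4, sub_eq_add_neg]
  -- quantitative bounds
  obtain ⟨C, hCpos, hC⟩ := exp_flow_bound Acl τM
  obtain ⟨c1, hc1, hc1b⟩ : ∃ c1 ≥ 0, ∀ v : Fin nc → ℝ, ‖Ccl.mulVec v‖ ≤ c1 * ‖v‖ :=
    ⟨‖LinearMap.toContinuousLinearMap Ccl.mulVecLin‖, norm_nonneg _,
      fun v => (LinearMap.toContinuousLinearMap Ccl.mulVecLin).le_opNorm v⟩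
  obtain ⟨c2, hc2, hc2b⟩ : ∃ c2 ≥ 0, ‖z 0 ((0 : ℝ) * τM)‖ ≤ c2 :=
    ⟨‖z 0 ((0 : ℝ) * τM)‖, norm_nonneg _, le_rfl⟩
  intro ε hε
  have hB : 0 < C * (c1 + 1) * (c2 + 1) := by positivity
  set B : ℝ := C * (c1 + 1) * (c2 + 1) with hB_def
  obtain ⟨K, hK⟩ := pow_mulVec_small M hGES (ε / B) (div_pos hε hB)
  refine ⟨(K : ℝ) * τM + K, fun k t ht hT => ?_⟩
  have hkK : K ≤ k := by
    by_contra hlt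
    push_neg at hlt
    have hk1 : (k : ℝ) + 1 ≤ (K : ℝ) := by exact_mod_cast hlt
    have ht2 := ht.2
    have hkk : (k : ℝ) < (K : ℝ) := by linarith
    have h9 : ((k : ℝ) + 1) * τM ≤ (K : ℝ) * τM := mul_le_mul_of_nonneg_right hk1 hτM.le
    have : t + (k : ℝ) < (K : ℝ) * τM + K := by linarith
    linarith
  have hz_eq := hrep k t ht
  have hs : t - (k : ℝ) * τM ∈ Set.Icc (0 : ℝ) τM := by
    constructor
    · linarith [ht.1]
    · have : ((k : ℝ) + 1) * τM = (k : ℝ) * τM + τM := by ring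
      linarith [ht.2]
  have hflowb : ‖z k t‖ ≤ C * ‖z k ((k : ℝ) * τM)‖ := by
    rw [hz_eq]
    exact hC _ hs _
  have hpowb : ‖z k ((k : ℝ) * τM)‖ ≤ ε / B * c2 := by
    rw [hζ k]
    calc ‖(M ^ k).mulVec (z 0 ((0 : ℝ) * τM))‖ ≤ ε / B * ‖z 0 ((0 : ℝ) * τM)‖ := hK k hkK _
      _ ≤ ε / B * c2 := mul_le_mul_of_nonneg_left hc2b (div_pos hε hB).le
  have hchain : ‖Ccl.mulVec (x k t) + Qcl.mulVec (w k t)‖ ≤ ε / B * (C * c1 * c2) := by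
    rw [herr k t]
    calc ‖Ccl.mulVec (z k t)‖ ≤ c1 * ‖z k t‖ := hc1b _
      _ ≤ c1 * (C * ‖z k ((k : ℝ) * τM)‖) := mul_le_mul_of_nonneg_left hflowb hc1
      _ ≤ c1 * (C * (ε / B * c2)) :=
          mul_le_mul_of_nonneg_left (mul_le_mul_of_nonneg_left hpowb hCpos.le) hc1
      _ = ε / B * (C * c1 * c2) := by ring
  have h2 : C * c1 * c2 < B := by
    have e1 : c1 * c2 < (c1 + 1) * (c2 + 1) := by
      have e2 : (c1 + 1) * (c2 + 1) = c1 * c2 + (c1 + c2 + 1) := by ring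
      linarith
    rw [hB_def]
    calc C * c1 * c2 = C * (c1 * c2) := by ring
      _ < C * ((c1 + 1) * (c2 + 1)) := mul_lt_mul_of_pos_left e1 hCpos
      _ = C * (c1 + 1) * (c2 + 1) := by ring
  calc ‖Ccl.mulVec (x k t) + Qcl.mulVec (w k t)‖ ≤ ε / B * (C * c1 * c2) := hchain
    _ < ε / B * B := mul_lt_mul_of_pos_left h2 (div_pos hε hB)
    _ = ε := div_mul_cancel₀ ε hB.ne'
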